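/- For any bidder i with valuation v_i in the multi-dimensional score auction, and for any bid (b̄, d̄), there exists a bid (b̂, d̂) with d̂ = argmax_{d ∈ (0, D]} (v_i + Σ_n φ(d_n)) and b̂ chosen so that Φ(b̂, d̂) = Φ(b̄, d̄), such that the expected utility from (b̂, d̂) is at least the expected utility from (b̄, d̄). -/
import Mathlib


/-- For any bid `(b̄, d̄)` with deadlines in `(0, D]`, there exists a
bid `(b̂, d̂)` where `d̂` maximizes `v + ∑ φ(d n)` over `(0, D]` and `b̂` is chosen
so that the two bids have equal scores (hence equal allocation probability
`win`), and the expected utility `win(Φ) * (v - b)` from `(b̂, d̂)` is at least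
that from `(b̄, d̄)`. -/
theorem stmt1
    (N : ℕ) (φ : ℝ → ℝ) (hφ : Monotone φ) (hφ0 : φ 0 = 0)
    (D : ℝ) (hD : 0 < D)
    (v : ℝ) (hv : 0 ≤ v)
    (win : ℝ → ℝ)  -- allocation probability as a function of the score
    (hwin : ∀ s, win s ∈ Set.Icc (0 : ℝ) 1)
    (bbar : ℝ) (dbar : Fin N → ℝ) (hdbar : ∀ n, dbar n ∈ Set.Ioc 0 D) :
    ∃ (bhat : ℝ) (dhat : Fin N → ℝ),
      (∀ n, dhat n ∈ Set.Ioc 0 D) ∧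
      (∀ d : Fin N → ℝ, (∀ n, d n ∈ Set.Ioc 0 D) →
        v + ∑ n, φ (d n) ≤ v + ∑ n, φ (dhat n)) ∧
      bhat + ∑ n, φ (dhat n) = bbar + ∑ n, φ (dbar n) ∧
      win (bbar + ∑ n, φ (dbar n)) * (v - bbar) ≤
        win (bhat + ∑ n, φ (dhat n)) * (v - bhat) := by
  refine ⟨bbar + ∑ n, φ (dbar n) - ∑ n : Fin N, φ D, fun _ => D, fun n => ⟨hD, le_refl D⟩,
    ?_, by ring, ?_⟩
  · intro d hd
    have : ∑ n, φ (d n) ≤ ∑ n : Fin N, φ D :=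
      Finset.sum_le_sum fun n _ => hφ (hd n).2
    linarith
  · have hsum : ∑ n, φ (dbar n) ≤ ∑ n : Fin N, φ D :=
      Finset.sum_le_sum fun n _ => hφ (hdbar n).2
    have heq : bbar + ∑ n, φ (dbar n) - ∑ n : Fin N, φ D + ∑ n : Fin N, φ D
        = bbar + ∑ n, φ (dbar n) := by ring
    rw [heq]
    have h0 := (hwin (bbar + ∑ n, φ (dbar n))).1
    nlinarith
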